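/- arXiv:2106.14442 — 7 statements merged into one kernel-verified Lean document; each statement's English description precedes it below -/
import Mathlib

section
/- If a vector y in ℝ^n w-Lorenz-dominates a vector x in ℝ^n (with positive weights w), then there exists an index j such that y_j > x_j and, for every index i, y_i/w_i ≥ min{x_i/w_i, x_j/w_j}. -/
open Finset

/-- Cumulative sum of the first `i` entries of `v` along the ordering `σ`. -/
noncomputable def cumSum (n : ℕ) (v : Fin n → ℝ) (σ : Equiv.Perm (Fin n)) (i : ℕ) : ℝ :=
  ∑ k ∈ Finset.range i, if h : k < n then v (σ ⟨k, h⟩) else 0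

/-- `σ` sorts the ratios `x i / w i` non-decreasingly. -/
def Sorts (n : ℕ) (x w : Fin n → ℝ) (σ : Equiv.Perm (Fin n)) : Prop :=
  ∀ i j : Fin n, i ≤ j → x (σ i) / w (σ i) ≤ x (σ j) / w (σ j)

open scoped Classical in
/-- The piecewise-linear `w`-Lorenz-curve of `x`, computed with a sorting permutation `σ`:
it vanishes at `0`, passes through the partial sums at the breakpoints given by the
cumulative weights, and is linear in between. -/
noncomputable def lorenz (n : ℕ) (x w : Fin n → ℝ) (σ : Equiv.Perm (Fin n)) (p : ℝ) : ℝ :=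
  if p ≤ 0 then 0
  else
    (fun j => cumSum n x σ j +
      (p - cumSum n w σ j) * (if h : j < n then x (σ ⟨j, h⟩) / w (σ ⟨j, h⟩) else 0))
    (((Finset.range n).filter (fun i => cumSum n w σ i < p)).card - 1)

/-- `y` `w`-Lorenz-dominates `x`: the Lorenz curve of `y` is pointwise `≥` that of `x`
on `[0, W]`, with strict inequality somewhere. -/
def LorenzDom (n : ℕ) (y x w : Fin n → ℝ) : Prop :=
  ∃ σy σx : Equiv.Perm (Fin n), Sorts n y w σy ∧ Sorts n x w σx ∧
    (∀ p ∈ Set.Icc (0:ℝ) (∑ i, w i), lorenz n x w σx p ≤ lorenz n y w σy p) ∧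
    ∃ p ∈ Set.Icc (0:ℝ) (∑ i, w i), lorenz n x w σx p < lorenz n y w σy p

/-!
For a sorting permutation, the Lorenz curve at `p ∈ (0, W]` has two descriptions: it is
`∑ tᵢ vᵢ` for the greedy fractional selection `t ∈ [0,1]ⁿ` of total weight `p`, and it is
`p r + ∑ᵢ min 0 (vᵢ - r wᵢ)` for the ratio `r` at the breakpoint. Since `min 0 d ≤ t d` for
`t ∈ [0,1]`, the second makes it the least value of `∑ tᵢ vᵢ` over all selections of weight `p`,
and the first bounds it below by `p r + ∑ᵢ min 0 (vᵢ - r wᵢ)` for every `r`. In particular it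
does not depend on the sorting permutation, so `y ≠ x`.

If `x i / w i ≤ y i / w i` for all `i`, any `j` with `x j < y j` will do. Otherwise, let `m` be
the least ratio `y i₀ / w i₀` over the `i₀` with `y i₀ / w i₀ < x i₀ / w i₀`; it suffices to find
`j` with `x j < y j` and `x j / w j ≤ m`. If there were none, put `T = {j | x j / w j ≤ m}`, which
avoids `i₀` and on which `y ≤ x`, and `p = w i₀ + w(T)`. Then `L_y(p) ≤ y i₀ + y(T) ≤ m w i₀ + x(T)`,
while the lower bound with `r` the least ratio of `x` outside `T` gives
`L_x(p) ≥ r w i₀ + x(T)`; as `m < r`, this contradicts `L_x ≤ L_y`.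
-/

lemma min_zero_le_mul {t d : ℝ} (ht : t ∈ Set.Icc (0 : ℝ) 1) : min 0 d ≤ t * d := by
  rcases le_total 0 d with hd | hd
  · exact (min_le_left _ _).trans (mul_nonneg ht.1 hd)
  · exact (min_le_right _ _).trans (by nlinarith [ht.2])

lemma sum_mul_add_sum_min_le {ι : Type*} [Fintype ι] {t : ι → ℝ}
    (ht : ∀ i, t i ∈ Set.Icc (0 : ℝ) 1) (v w : ι → ℝ) (r : ℝ) :
    (∑ i, t i * w i) * r + ∑ i, min 0 (v i - r * w i) ≤ ∑ i, t i * v i := by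
  have hsplit : ∑ i, t i * v i = (∑ i, t i * w i) * r + ∑ i, t i * (v i - r * w i) := by
    rw [sum_mul, ← sum_add_distrib]
    exact sum_congr rfl fun i _ => by ring
  rw [hsplit]
  gcongr with i
  exact min_zero_le_mul (ht i)

section

variable {n : ℕ}

lemma cumSum_eq_sum_ite (v : Fin n → ℝ) (σ : Equiv.Perm (Fin n)) {j : ℕ} (hj : j ≤ n) :
    cumSum n v σ j = ∑ k : Fin n, if (k : ℕ) < j then v (σ k) else 0 := by
  set g : ℕ → ℝ := fun k => if h : k < n then v (σ ⟨k, h⟩) else 0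
  calc cumSum n v σ j = ∑ k ∈ range n, if k < j then g k else 0 := by
        rw [cumSum, ← sum_filter]
        refine sum_congr ?_ fun _ _ => rfl
        ext k
        simp only [mem_range, mem_filter]
        omega
    _ = _ := by
        rw [← Fin.sum_univ_eq_sum_range]
        simp [g]

lemma cumSum_succ (v : Fin n → ℝ) (σ : Equiv.Perm (Fin n)) (k : Fin n) :
    cumSum n v σ (k + 1) = cumSum n v σ k + v (σ k) := by
  simp [cumSum, sum_range_succ, k.isLt]

lemma cumSum_self (v : Fin n → ℝ) (σ : Equiv.Perm (Fin n)) : cumSum n v σ n = ∑ i, v i := by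
  simp [cumSum_eq_sum_ite v σ le_rfl, Equiv.sum_comp]

lemma cumSum_mono {w : Fin n → ℝ} (hw : ∀ i, 0 ≤ w i) (σ : Equiv.Perm (Fin n)) :
    Monotone (cumSum n w σ) := fun _ _ hab =>
  sum_le_sum_of_subset_of_nonneg (range_subset_range.2 hab) fun k _ _ => by
    split_ifs
    exacts [hw _, le_rfl]

lemma exists_cumSum_lt_le {w : Fin n → ℝ} (σ : Equiv.Perm (Fin n)) {p : ℝ} (hp : 0 < p)
    (hpW : p ≤ ∑ i, w i) : ∃ j : Fin n, cumSum n w σ j < p ∧ p ≤ cumSum n w σ (j + 1) := by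
  have hex : ∃ k, p ≤ cumSum n w σ k := ⟨n, by rwa [cumSum_self]⟩
  have hk0 : 0 < Nat.find hex := (Nat.find_pos hex).2 (by simpa [cumSum] using hp)
  have hkn : Nat.find hex ≤ n := Nat.find_min' hex (by rwa [cumSum_self])
  refine ⟨⟨Nat.find hex - 1, by omega⟩, not_le.1 (Nat.find_min hex (Nat.sub_lt hk0 one_pos)), ?_⟩
  convert Nat.find_spec hex using 2
  simp only
  omega

lemma lorenz_eq_of_cumSum_lt_le {w : Fin n → ℝ} (hw : ∀ i, 0 ≤ w i) (v : Fin n → ℝ)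
    (σ : Equiv.Perm (Fin n)) {p : ℝ} (j : Fin n) (hjp : cumSum n w σ j < p)
    (hpj : p ≤ cumSum n w σ (j + 1)) :
    lorenz n v w σ p = cumSum n v σ j + (p - cumSum n w σ j) * (v (σ j) / w (σ j)) := by
  have hp : 0 < p := lt_of_le_of_lt (by simpa [cumSum] using cumSum_mono hw σ (Nat.zero_le j)) hjp
  have hcard : ((range n).filter (fun i => cumSum n w σ i < p)).card = j + 1 := by
    rw [← card_range (j + 1)]
    congr 1
    ext i
    simp only [mem_filter, mem_range]
    constructor
    · rintro ⟨-, hi⟩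
      by_contra! h
      exact not_lt.2 (hpj.trans (cumSum_mono hw σ h)) hi
    · intro hi
      exact ⟨by omega, (cumSum_mono hw σ (Nat.lt_succ_iff.1 hi)).trans_lt hjp⟩
  simp only [lorenz, if_neg (not_le.2 hp)]
  simp [hcard]

lemma exists_lorenz_eq_sum_mul {w : Fin n → ℝ} (hw : ∀ i, 0 < w i) (σ : Equiv.Perm (Fin n))
    {p : ℝ} (hp : 0 ≤ p) (hpW : p ≤ ∑ i, w i) :
    ∃ t : Fin n → ℝ, (∀ i, t i ∈ Set.Icc (0 : ℝ) 1) ∧ ∑ i, t i * w i = p ∧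
      ∀ v, lorenz n v w σ p = ∑ i, t i * v i := by
  rcases hp.eq_or_lt with rfl | hp
  · exact ⟨0, fun _ => by simp, by simp, fun v => by simp [lorenz]⟩
  obtain ⟨j, hjp, hpj⟩ := exists_cumSum_lt_le σ hp hpW
  have hwj := hw (σ j)
  set s := (p - cumSum n w σ j) / w (σ j) with hs_eq
  have hs0 : 0 ≤ s := div_nonneg (by linarith) hwj.le
  have hs1 : s ≤ 1 := by
    rw [div_le_one hwj]
    linarith [cumSum_succ w σ j]
  set t : Fin n → ℝ := fun i => if (σ.symm i : ℕ) < j then 1 else if σ.symm i = j then s else 0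
  have hsum : ∀ v, ∑ i, t i * v i = cumSum n v σ j + s * v (σ j) := fun v => by
    have hj : s * v (σ j) = ∑ k, if k = j then s * v (σ k) else 0 := by simp
    rw [← Equiv.sum_comp σ, cumSum_eq_sum_ite v σ j.isLt.le, hj, ← sum_add_distrib]
    refine sum_congr rfl fun k _ => ?_
    simp only [t, Equiv.symm_apply_apply]
    split_ifs with hlt heq <;> first | (subst heq; omega) | ring
  refine ⟨t, fun i => ?_, ?_, fun v => ?_⟩
  · simp only [t]
    split_ifs <;> simp [hs0, hs1]
  · rw [hsum, hs_eq, div_mul_cancel₀ _ hwj.ne']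
    ring
  · rw [hsum, lorenz_eq_of_cumSum_lt_le (fun i => (hw i).le) v σ j hjp hpj, hs_eq]
    ring

lemma exists_lorenz_eq_mul_add_sum_min {v w : Fin n → ℝ} (hw : ∀ i, 0 < w i)
    {σ : Equiv.Perm (Fin n)} (hs : Sorts n v w σ) {p : ℝ} (hp : 0 < p) (hpW : p ≤ ∑ i, w i) :
    ∃ r, lorenz n v w σ p = p * r + ∑ i, min 0 (v i - r * w i) := by
  obtain ⟨j, hjp, hpj⟩ := exists_cumSum_lt_le σ hp hpW
  set r := v (σ j) / w (σ j)
  have hprefix : cumSum n v σ j - r * cumSum n w σ j = ∑ i, min 0 (v i - r * w i) := by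
    rw [← Equiv.sum_comp σ, cumSum_eq_sum_ite v σ j.isLt.le, cumSum_eq_sum_ite w σ j.isLt.le,
      mul_sum, ← sum_sub_distrib]
    refine sum_congr rfl fun k _ => ?_
    split_ifs with hk
    · have := hs k j (Fin.le_def.2 hk.le)
      rw [div_le_iff₀ (hw _)] at this
      rw [min_eq_right (by linarith)]
    · have := hs j k (Fin.le_def.2 (not_lt.1 hk))
      rw [le_div_iff₀ (hw _)] at this
      rw [min_eq_left (by linarith)]
      ring
  refine ⟨r, ?_⟩
  rw [lorenz_eq_of_cumSum_lt_le (fun i => (hw i).le) v σ j hjp hpj, ← hprefix]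
  ring

lemma lorenz_le_sum_mul {v w : Fin n → ℝ} (hw : ∀ i, 0 < w i) {σ : Equiv.Perm (Fin n)}
    (hs : Sorts n v w σ) {t : Fin n → ℝ} (ht : ∀ i, t i ∈ Set.Icc (0 : ℝ) 1)
    (hp : 0 < ∑ i, t i * w i) :
    lorenz n v w σ (∑ i, t i * w i) ≤ ∑ i, t i * v i := by
  have hpW : ∑ i, t i * w i ≤ ∑ i, w i :=
    sum_le_sum fun i _ => mul_le_of_le_one_left (hw i).le (ht i).2
  obtain ⟨r, hr⟩ := exists_lorenz_eq_mul_add_sum_min hw hs hp hpW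
  rw [hr]
  exact sum_mul_add_sum_min_le ht v w r

lemma lorenz_sum_le_sum {v w : Fin n → ℝ} (hw : ∀ i, 0 < w i) {σ : Equiv.Perm (Fin n)}
    (hs : Sorts n v w σ) {S : Finset (Fin n)} (hS : S.Nonempty) :
    lorenz n v w σ (∑ i ∈ S, w i) ≤ ∑ i ∈ S, v i := by
  have hind : ∀ u : Fin n → ℝ, ∑ i, (if i ∈ S then 1 else 0) * u i = ∑ i ∈ S, u i := fun u => by
    simp [ite_mul, sum_ite_mem]
  have := lorenz_le_sum_mul hw hs (t := fun i => if i ∈ S then 1 else 0)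
    (fun i => by split_ifs <;> simp) (by rw [hind]; exact sum_pos (fun i _ => hw i) hS)
  rwa [hind, hind] at this

lemma mul_add_sum_min_le_lorenz {w : Fin n → ℝ} (hw : ∀ i, 0 < w i) (v : Fin n → ℝ)
    (σ : Equiv.Perm (Fin n)) {p : ℝ} (hp : 0 ≤ p) (hpW : p ≤ ∑ i, w i) (r : ℝ) :
    p * r + ∑ i, min 0 (v i - r * w i) ≤ lorenz n v w σ p := by
  obtain ⟨t, ht, htw, hL⟩ := exists_lorenz_eq_sum_mul hw σ hp hpW
  rw [hL, ← htw]
  exact sum_mul_add_sum_min_le ht v w r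

lemma lorenz_le_lorenz_of_sorts {v w : Fin n → ℝ} (hw : ∀ i, 0 < w i) {σ : Equiv.Perm (Fin n)}
    (hs : Sorts n v w σ) (τ : Equiv.Perm (Fin n)) {p : ℝ} (hpW : p ≤ ∑ i, w i) :
    lorenz n v w σ p ≤ lorenz n v w τ p := by
  by_cases hp : p ≤ 0
  · simp [lorenz, hp]
  obtain ⟨t, ht, htw, hL⟩ := exists_lorenz_eq_sum_mul hw τ (le_of_not_ge hp) hpW
  rw [hL, ← htw]
  exact lorenz_le_sum_mul hw hs ht (htw ▸ not_le.1 hp)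

lemma lorenzDom_irrefl {w : Fin n → ℝ} (hw : ∀ i, 0 < w i) (x : Fin n → ℝ) :
    ¬ LorenzDom n x x w := by
  rintro ⟨σ, τ, hσ, -, -, p, hp, hlt⟩
  exact not_lt.2 (lorenz_le_lorenz_of_sorts hw hσ τ hp.2) hlt

lemma exists_lt_div_le_of_div_lt {x y w : Fin n → ℝ} (hw : ∀ i, 0 < w i)
    {σx σy : Equiv.Perm (Fin n)} (hsy : Sorts n y w σy)
    (hle : ∀ p ∈ Set.Icc (0 : ℝ) (∑ i, w i), lorenz n x w σx p ≤ lorenz n y w σy p)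
    {i₀ : Fin n} (hi₀ : y i₀ / w i₀ < x i₀ / w i₀) :
    ∃ j, x j < y j ∧ x j / w j ≤ y i₀ / w i₀ := by
  set m := y i₀ / w i₀
  by_contra! hgt
  set T := univ.filter fun j => x j / w j ≤ m
  have hyx : ∀ j ∈ T, y j ≤ x j := fun j hj => by
    by_contra! h
    exact not_lt.2 (mem_filter.1 hj).2 (hgt j h)
  have hi₀T : i₀ ∉ T := by simpa [T] using hi₀
  obtain ⟨i₁, hi₁, hr⟩ := exists_min_image (univ.filter fun i => m < x i / w i)
    (fun i => x i / w i) ⟨i₀, by simpa using hi₀⟩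
  set r := x i₁ / w i₁
  have hmr : m < r := (mem_filter.1 hi₁).2
  have hmin : ∑ i, min 0 (x i - r * w i) = ∑ j ∈ T, x j - r * ∑ j ∈ T, w j := by
    rw [mul_sum, ← sum_sub_distrib, sum_filter]
    refine sum_congr rfl fun i _ => ?_
    split_ifs with hi
    · have : x i ≤ r * w i := (div_le_iff₀ (hw i)).1 (hi.trans hmr.le)
      exact min_eq_right (by linarith)
    · have : r * w i ≤ x i := (le_div_iff₀ (hw i)).1 (hr i (by simpa using hi))
      exact min_eq_left (by linarith)
  have hp : 0 ≤ ∑ i ∈ insert i₀ T, w i := sum_nonneg fun i _ => (hw i).le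
  have hpW : ∑ i ∈ insert i₀ T, w i ≤ ∑ i, w i := sum_le_univ_sum_of_nonneg fun i => (hw i).le
  have hlower := mul_add_sum_min_le_lorenz hw x σx hp hpW r
  have hupper := lorenz_sum_le_sum hw hsy (insert_nonempty i₀ T)
  have hdom := hle _ ⟨hp, hpW⟩
  simp only [sum_insert hi₀T] at hlower hupper hdom
  rw [hmin, show ∀ a b c : ℝ, (a + b) * r + (c - r * b) = c + r * a by intros; ring] at hlower
  have hyi₀ : y i₀ = m * w i₀ := (div_mul_cancel₀ _ (hw i₀).ne').symm
  have := mul_lt_mul_of_pos_right hmr (hw i₀)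
  have := sum_le_sum hyx
  linarith

end

/-- If `y` `w`-Lorenz-dominates `x`, then there is an index `j` with `y j > x j` and
`y i / w i ≥ min (x i / w i) (x j / w j)` for every `i`. -/
theorem lorenzDom_exists_gt_min (n : ℕ) (x y w : Fin n → ℝ) (hw : ∀ i, 0 < w i)
    (hdom : LorenzDom n y x w) :
    ∃ j : Fin n, x j < y j ∧ ∀ i : Fin n, min (x i / w i) (x j / w j) ≤ y i / w i := by
  by_cases hB : ∃ i, y i / w i < x i / w i
  · obtain ⟨σy, σx, hsy, -, hle, -⟩ := hdom
    obtain ⟨i₀, hi₀, hmin⟩ := exists_min_image (univ.filter fun i => y i / w i < x i / w i)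
      (fun i => y i / w i) (let ⟨i, hi⟩ := hB; ⟨i, by simpa using hi⟩)
    obtain ⟨j, hxy, hj⟩ := exists_lt_div_le_of_div_lt hw hsy hle (mem_filter.1 hi₀).2
    refine ⟨j, hxy, fun i => ?_⟩
    by_cases hi : y i / w i < x i / w i
    · exact (min_le_right _ _).trans (hj.trans (hmin i (by simpa using hi)))
    · exact (min_le_left _ _).trans (not_lt.1 hi)
  · simp only [not_exists, not_lt] at hB
    obtain ⟨j, hj⟩ : ∃ j, x j < y j := by
      by_contra! hyx
      have hxy : y = x := funext fun i =>
        le_antisymm (hyx i) ((div_le_div_iff_of_pos_right (hw i)).1 (hB i))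
      exact lorenzDom_irrefl hw x (hxy ▸ hdom)
    exact ⟨j, hj, fun i => (min_le_left _ _).trans (hB i)⟩
end

section
/- Let x, y ∈ ℝ^n and suppose there exists an index j with y_j > x_j and y_i ≥ min{x_i, x_j} for all i. Then the vector z := (x+y)/2 lexicographically dominates x, where vectors are compared by first sorting their entries non-decreasingly and then comparing lexicographically (i.e., the sorted version of z is strictly greater in lexicographic order than the sorted version of x). -/
/-!
Let `T = x j`. Every entry of `z = (x + y) / 2` either stays at least `x i` (when `x i ≤ T`)
or stays above `T` (when `x i > T`), and `z j > T`. Hence for every threshold `t ≤ T`, fewer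
entries of `z` than of `x` lie below `t`, and strictly fewer lie in `(-∞, T]`. Reading the
sorted vectors through these counts, with `m` the number of entries of `x` that are `≤ T`,
the first `m` entries of `sort z` dominate those of `sort x`, and the `m`-th strictly so.
-/

open Finset

/-- The non-decreasing rearrangement of `v`. -/
noncomputable def sortedVec (n : ℕ) (v : Fin n → ℝ) : Fin n → ℝ := v ∘ Tuple.sort v

/-- `z` lexicographically dominates `x`: the sorted version of `z` is strictly greater
than the sorted version of `x` in the lexicographic order. -/
noncomputable def LexDom (n : ℕ) (z x : Fin n → ℝ) : Prop :=
  toLex (sortedVec n x) < toLex (sortedVec n z)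

theorem toLex_lt_toLex_of_le_of_lt {ι β : Type*} [LinearOrder ι] [WellFoundedLT ι]
    [PartialOrder β] {f g : ι → β} {K : ι} (hle : ∀ i ≤ K, f i ≤ g i) (hlt : f K < g K) :
    toLex f < toLex g := by
  obtain ⟨i, hi, hmin⟩ := wellFounded_lt.has_min {i | f i ≠ g i} ⟨K, hlt.ne⟩
  have hiK : i ≤ K := not_lt.1 (hmin K hlt.ne)
  exact ⟨i, fun l hl => not_not.1 fun h => hmin l h hl, (hle i hiK).lt_of_ne hi⟩

theorem Monotone.mem_iff_lt_card_filter {α : Type*} [Preorder α] {n : ℕ} {f : Fin n → α}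
    (hf : Monotone f) {s : Set α} [DecidablePred (· ∈ s)] (hs : IsLowerSet s) (k : Fin n) :
    f k ∈ s ↔ (k : ℕ) < #{l | f l ∈ s} := by
  constructor
  · intro hk
    calc (k : ℕ) < #(Iic k) := by simp
      _ ≤ #{l | f l ∈ s} := card_le_card fun l hl => by
        simp only [mem_Iic, mem_filter, mem_univ, true_and] at hl ⊢
        exact hs (hf hl) hk
  · intro hk
    by_contra hks
    have : #{l | f l ∈ s} ≤ #(Iio k) := card_le_card fun l hl => by
      simp only [mem_Iio, mem_filter, mem_univ, true_and] at hl ⊢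
      exact not_le.1 fun hkl => hks (hs (hf hkl) hl)
    simp only [Fin.card_Iio] at this
    omega

theorem Tuple.sort_mem_iff_lt_card_filter {α : Type*} [LinearOrder α] {n : ℕ}
    {s : Set α} [DecidablePred (· ∈ s)] (hs : IsLowerSet s) (v : Fin n → α) (k : Fin n) :
    (v ∘ Tuple.sort v) k ∈ s ↔ (k : ℕ) < #{i | v i ∈ s} := by
  have hcard : #{l | v (Tuple.sort v l) ∈ s} = #{i | v i ∈ s} :=
    card_equiv (Tuple.sort v) (by simp)
  rw [(Tuple.monotone_sort v).mem_iff_lt_card_filter hs, Function.comp_def, hcard]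

theorem sortedVec_le_sortedVec_of_card_filter_le {n : ℕ} {x z : Fin n → ℝ} {k : Fin n}
    (h : #{i | z i ∈ Set.Iio (sortedVec n x k)} ≤ #{i | x i ∈ Set.Iio (sortedVec n x k)}) :
    sortedVec n x k ≤ sortedVec n z k := by
  by_contra! hlt
  have hz := (Tuple.sort_mem_iff_lt_card_filter (isLowerSet_Iio (sortedVec n x k)) z k).1 hlt
  have hx := (Tuple.sort_mem_iff_lt_card_filter (isLowerSet_Iio (sortedVec n x k)) x k).not.1
    Set.self_notMem_Iio
  omega

theorem mem_of_add_div_two_mem {s : Set ℝ} (hs : IsLowerSet s) {T a b : ℝ}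
    (hsT : s ⊆ Set.Iic T) (hb : min a T ≤ b) (h : (a + b) / 2 ∈ s) : a ∈ s := by
  rcases le_or_gt a T with haT | hTa
  · rw [min_eq_left haT] at hb
    exact hs (by linarith) h
  · rw [min_eq_right hTa.le] at hb
    linarith [Set.mem_Iic.1 (hsT h)]

theorem filter_add_div_two_mem_subset {n : ℕ} {x y : Fin n → ℝ} {T : ℝ}
    (hmin : ∀ i, min (x i) T ≤ y i) {s : Set ℝ} [DecidablePred (· ∈ s)] (hs : IsLowerSet s)
    (hsT : s ⊆ Set.Iic T) :
    ({i | (x i + y i) / 2 ∈ s} : Finset (Fin n)) ⊆ ({i | x i ∈ s} : Finset (Fin n)) :=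
  monotone_filter_right _ fun i _ => mem_of_add_div_two_mem hs hsT (hmin i)

/-- If `y j > x j` for some `j` and `y i ≥ min (x i) (x j)` for all `i`, then the midpoint
`(x + y) / 2` lexicographically dominates `x`. -/
theorem midpoint_lexDom (n : ℕ) (x y : Fin n → ℝ) (j : Fin n)
    (hj : x j < y j) (hmin : ∀ i : Fin n, min (x i) (x j) ≤ y i) :
    LexDom n (fun i => (x i + y i) / 2) x := by
  set z : Fin n → ℝ := fun i => (x i + y i) / 2
  have hcount_lt : #{i | z i ∈ Set.Iic (x j)} < #{i | x i ∈ Set.Iic (x j)} := by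
    refine card_lt_card ((ssubset_iff_of_subset ?_).2 ⟨j, ?_, ?_⟩)
    · exact filter_add_div_two_mem_subset hmin (isLowerSet_Iic _) le_rfl
    · simp
    · simp only [mem_filter, mem_univ, true_and, Set.mem_Iic, z]
      linarith
  obtain ⟨K, hK⟩ : ∃ K : Fin n, (K : ℕ) + 1 = #{i | x i ∈ Set.Iic (x j)} := by
    have hle : #{i | x i ∈ Set.Iic (x j)} ≤ n := card_le_univ _ |>.trans_eq (Fintype.card_fin n)
    exact ⟨⟨#{i | x i ∈ Set.Iic (x j)} - 1, by omega⟩, by simp only; omega⟩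
  have hxK : sortedVec n x K ≤ x j :=
    (Tuple.sort_mem_iff_lt_card_filter (isLowerSet_Iic (x j)) x K).2 (by omega)
  have hzK : x j < sortedVec n z K := not_le.1 fun h => by
    have := (Tuple.sort_mem_iff_lt_card_filter (isLowerSet_Iic (x j)) z K).1 h
    omega
  refine toLex_lt_toLex_of_le_of_lt (fun k hk => ?_) (hxK.trans_lt hzK)
  refine sortedVec_le_sortedVec_of_card_filter_le
    (card_le_card (filter_add_div_two_mem_subset hmin (isLowerSet_Iio _) fun t ht => ?_))
  exact (le_of_lt ht).trans ((Tuple.monotone_sort x hk).trans hxK)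
end

section
/- Let x, y ∈ ℝ^n with x ≠ y, and suppose there exists an index j with y_j > x_j and y_i ≥ min{x_i, x_j} for all i. Then x is not the lexicographically maximal element (under sorted-entry lexicographic comparison) of any convex set containing both x and y. -/
open Finset

private lemma mono_mem_iff {n : ℕ} (u : Fin n → ℝ) (hu : Monotone u) (P : ℝ → Prop)
    [DecidablePred P] (hP : ∀ a b : ℝ, a ≤ b → P b → P a) (k : Fin n) :
    P (u k) ↔ (k : ℕ) < (Finset.univ.filter fun i => P (u i)).card := by
  constructor
  · intro h
    have hsub : Finset.Iic k ⊆ Finset.univ.filter fun i => P (u i) := by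
      intro i hi
      simp only [Finset.mem_Iic] at hi
      simp only [Finset.mem_filter, Finset.mem_univ, true_and]
      exact hP _ _ (hu hi) h
    have := Finset.card_le_card hsub
    rw [Fin.card_Iic] at this
    omega
  · intro h
    by_contra hP0
    have hsub : (Finset.univ.filter fun i => P (u i)) ⊆ Finset.Iio k := by
      intro i hi
      simp only [Finset.mem_filter, Finset.mem_univ, true_and] at hi
      simp only [Finset.mem_Iio]
      by_contra hki
      push_neg at hki
      exact hP0 (hP _ _ (hu hki) hi)
    have := Finset.card_le_card hsub
    rw [Fin.card_Iio] at this
    omega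

private lemma count_sorted {n : ℕ} (v : Fin n → ℝ) (P : ℝ → Prop) [DecidablePred P] :
    (Finset.univ.filter fun i => P (sortedVec n v i)).card
      = (Finset.univ.filter fun i => P (v i)).card := by
  refine Finset.card_bij (fun i _ => Tuple.sort v i) ?_ ?_ ?_
  · intro i hi
    simp only [Finset.mem_filter, Finset.mem_univ, true_and] at hi ⊢
    exact hi
  · intro i _ i' _ h
    exact (Tuple.sort v).injective h
  · intro b hb
    refine ⟨(Tuple.sort v).symm b, ?_, by simp⟩
    simp only [Finset.mem_filter, Finset.mem_univ, true_and] at hb ⊢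
    simpa [sortedVec] using hb

private lemma sorted_count_iff {n : ℕ} (v : Fin n → ℝ) (P : ℝ → Prop) [DecidablePred P]
    (hP : ∀ a b : ℝ, a ≤ b → P b → P a) (k : Fin n) :
    P (sortedVec n v k) ↔ (k : ℕ) < (Finset.univ.filter fun i => P (v i)).card := by
  have hm : Monotone (sortedVec n v) := Tuple.monotone_sort v
  exact (mono_mem_iff _ hm P hP k).trans (by rw [count_sorted])

/-- Under the hypotheses of the averaging lemma, `x` is not the lexicographically maximal
element of any convex set containing both `x` and `y`. -/
theorem not_lex_maximal_of_dominating (n : ℕ) (x y : Fin n → ℝ) (hne : x ≠ y)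
    (j : Fin n) (hj : x j < y j) (hmin : ∀ i : Fin n, min (x i) (x j) ≤ y i)
    (M : Set (Fin n → ℝ)) (hM : Convex ℝ M) (hx : x ∈ M) (hy : y ∈ M) :
    ¬ (∀ m ∈ M, ¬ LexDom n m x) := by
  classical
  intro H
  set a := x j with ha
  have hjuniv : (Finset.univ : Finset (Fin n)).Nonempty := ⟨j, Finset.mem_univ j⟩
  set T : Fin n → ℝ := fun i => if x i < a ∧ a < y i then (a - x i) / (y i - x i) else 1
    with hT
  have hTpos : ∀ i, 0 < T i := by
    intro i
    rw [hT]
    dsimp only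
    split
    · rename_i h
      exact div_pos (by linarith [h.1]) (by linarith [h.1, h.2])
    · norm_num
  have hinfpos : 0 < Finset.univ.inf' hjuniv T := by
    rw [Finset.lt_inf'_iff]
    exact fun i _ => hTpos i
  set t : ℝ := min (Finset.univ.inf' hjuniv T) 1 / 2 with htdef
  have ht0 : 0 < t := by
    have : 0 < min (Finset.univ.inf' hjuniv T) 1 := lt_min hinfpos one_pos
    rw [htdef]; linarith
  have ht1 : t < 1 := by
    have : min (Finset.univ.inf' hjuniv T) 1 ≤ 1 := min_le_right _ _
    rw [htdef]; linarith
  have htT : ∀ i, t < T i := by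
    intro i
    have h1 : min (Finset.univ.inf' hjuniv T) 1 ≤ Finset.univ.inf' hjuniv T :=
      min_le_left _ _
    have h2 : Finset.univ.inf' hjuniv T ≤ T i := Finset.inf'_le T (Finset.mem_univ i)
    rw [htdef]; linarith
  set z : Fin n → ℝ := (1 - t) • x + t • y with hzdef
  have hzi : ∀ i, z i = (1 - t) * x i + t * y i := by
    intro i; simp [hzdef]
  have hzM : z ∈ M := hM hx hy (by linarith) (le_of_lt ht0) (by ring)
  -- pointwise facts
  have hfact1 : ∀ i, x i < a → x i ≤ z i := by
    intro i hi
    have hy' : x i ≤ y i := by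
      have h := hmin i
      rwa [min_eq_left (le_of_lt hi)] at h
    rw [hzi]; nlinarith
  have hfact2 : ∀ i, x i < a → z i < a := by
    intro i hi
    by_cases hyi : y i ≤ a
    · rw [hzi]; nlinarith
    · push_neg at hyi
      have hTi : T i = (a - x i) / (y i - x i) := by rw [hT]; exact if_pos ⟨hi, hyi⟩
      have h1 : t < (a - x i) / (y i - x i) := hTi ▸ htT i
      have h2 : 0 < y i - x i := by linarith
      rw [lt_div_iff₀ h2] at h1
      rw [hzi]; nlinarith
  have hymin : ∀ i, a ≤ x i → a ≤ y i := by
    intro i hi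
    have h := hmin i
    rwa [min_eq_right hi] at h
  have hfact3 : ∀ i, a ≤ x i → a ≤ z i := by
    intro i hi
    have := hymin i hi
    rw [hzi]; nlinarith
  have hfact4 : ∀ i, a ≤ x i → z i ≤ a → x i = a := by
    intro i hi hz
    have := hymin i hi
    rw [hzi] at hz
    nlinarith
  have hzj : a < z j := by
    rw [hzi]
    have : x j = a := ha.symm
    nlinarith
  -- counting
  set ℓ := (Finset.univ.filter fun i => x i < a).card with hℓ
  have hz_lt_set : (Finset.univ.filter fun i => z i < a)
      = (Finset.univ.filter fun i => x i < a) := by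
    ext i
    simp only [Finset.mem_filter, Finset.mem_univ, true_and]
    constructor
    · intro h
      by_contra hxi
      push_neg at hxi
      exact absurd h (not_lt.mpr (hfact3 i hxi))
    · exact hfact2 i
  set A := (Finset.univ.filter fun i => x i ≤ a).card with hA
  set B := (Finset.univ.filter fun i => z i ≤ a).card with hB
  have hBA : B < A := by
    apply Finset.card_lt_card
    constructor
    · intro i hi
      simp only [Finset.mem_filter, Finset.mem_univ, true_and] at hi ⊢
      by_cases hxi : x i < a
      · exact le_of_lt hxi
      · push_neg at hxi
        exact le_of_eq (hfact4 i hxi hi)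
    · intro hsub
      have hjm : j ∈ Finset.univ.filter fun i => x i ≤ a := by
        simp [← ha]
      have := hsub hjm
      simp only [Finset.mem_filter, Finset.mem_univ, true_and] at this
      exact absurd this (not_le.mpr hzj)
  have hlB : ℓ ≤ B := by
    rw [hℓ, ← hz_lt_set, hB]
    apply Finset.card_le_card
    intro i hi
    simp only [Finset.mem_filter, Finset.mem_univ, true_and] at hi ⊢
    exact le_of_lt hi
  have hAn : A ≤ n := by
    rw [hA]
    calc (Finset.univ.filter fun i => x i ≤ a).card
        ≤ (Finset.univ : Finset (Fin n)).card := Finset.card_filter_le _ _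
      _ = n := by simp
  -- sorted facts
  have hmx : Monotone (sortedVec n x) := Tuple.monotone_sort x
  have hmz : Monotone (sortedVec n z) := Tuple.monotone_sort z
  have hx_lt : ∀ k : Fin n, sortedVec n x k < a ↔ (k : ℕ) < ℓ := fun k =>
    sorted_count_iff x (fun r => r < a) (fun u v huv h => lt_of_le_of_lt huv h) k
  have hz_lt : ∀ k : Fin n, sortedVec n z k < a ↔ (k : ℕ) < ℓ := by
    intro k
    have h := sorted_count_iff z (fun r => r < a) (fun u v huv h => lt_of_le_of_lt huv h) k
    rw [hℓ, ← hz_lt_set]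
    exact h
  have hx_le : ∀ k : Fin n, sortedVec n x k ≤ a ↔ (k : ℕ) < A := fun k =>
    sorted_count_iff x (fun r => r ≤ a) (fun u v huv h => le_trans huv h) k
  have hz_le : ∀ k : Fin n, sortedVec n z k ≤ a ↔ (k : ℕ) < B := fun k =>
    sorted_count_iff z (fun r => r ≤ a) (fun u v huv h => le_trans huv h) k
  have hlow : ∀ c, c ≤ a → ∀ k : Fin n, sortedVec n z k < c → sortedVec n x k < c := by
    intro c hc k hk
    have hk' := (sorted_count_iff z (fun r => r < c)
      (fun u v huv h => lt_of_le_of_lt huv h) k).mp hk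
    refine (sorted_count_iff x (fun r => r < c)
      (fun u v huv h => lt_of_le_of_lt huv h) k).mpr ?_
    refine lt_of_lt_of_le hk' (Finset.card_le_card ?_)
    intro i hi
    simp only [Finset.mem_filter, Finset.mem_univ, true_and] at hi ⊢
    have hza : z i < a := lt_of_lt_of_le hi hc
    have hxa : x i < a := by
      have : i ∈ Finset.univ.filter fun i => x i < a := by
        rw [← hz_lt_set]; simp [hza]
      simpa using this
    exact lt_of_le_of_lt (hfact1 i hxa) hi
  -- the witness index
  have hBn : B < n := lt_of_lt_of_le hBA hAn
  set ks : Fin n := ⟨B, hBn⟩ with hks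
  have hksval : (ks : ℕ) = B := rfl
  have hsxks : sortedVec n x ks = a := by
    have h1 : sortedVec n x ks ≤ a := (hx_le ks).mpr hBA
    have h2 : ¬ sortedVec n x ks < a := by
      rw [hx_lt ks]; omega
    exact le_antisymm h1 (not_lt.mp h2)
  have hszks : a < sortedVec n z ks := by
    have h1 : ¬ sortedVec n z ks ≤ a := by
      rw [hz_le ks]; omega
    exact lt_of_not_ge h1
  -- first index of difference
  set D := Finset.univ.filter (fun k => sortedVec n x k ≠ sortedVec n z k) with hD
  have hksD : ks ∈ D := by
    simp only [hD, Finset.mem_filter, Finset.mem_univ, true_and]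
    exact ne_of_lt (lt_of_eq_of_lt hsxks hszks)
  have hDne : D.Nonempty := ⟨ks, hksD⟩
  set k0 : Fin n := D.min' hDne with hk0def
  have hk0D : k0 ∈ D := D.min'_mem hDne
  have hne0 : sortedVec n x k0 ≠ sortedVec n z k0 := by
    simpa [hD] using hk0D
  have hfirst : ∀ k, k < k0 → sortedVec n x k = sortedVec n z k := by
    intro k hk
    by_contra h
    have hkD : k ∈ D := by simp [hD, h]
    exact absurd hk (not_lt.mpr (D.min'_le k hkD))
  have hk0ks : k0 ≤ ks := D.min'_le ks hksD
  have hk0B : (k0 : ℕ) ≤ B := hk0ks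
  have hlt : sortedVec n x k0 < sortedVec n z k0 := by
    rcases lt_or_ge (k0 : ℕ) ℓ with h | h
    · rcases lt_or_ge (sortedVec n x k0) (sortedVec n z k0) with h2 | h2
      · exact h2
      · exfalso
        have h3 : sortedVec n z k0 < sortedVec n x k0 := lt_of_le_of_ne h2 (Ne.symm hne0)
        have hca : sortedVec n x k0 < a := (hx_lt k0).mpr h
        exact absurd (hlow _ (le_of_lt hca) k0 h3) (lt_irrefl _)
    · rcases lt_or_eq_of_le hk0B with hlt' | heq
      · exfalso
        have hxk : sortedVec n x k0 = a := by
          have h1 : sortedVec n x k0 ≤ a := (hx_le k0).mpr (lt_trans hlt' hBA)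
          have h2 : ¬ sortedVec n x k0 < a := by rw [hx_lt k0]; omega
          exact le_antisymm h1 (not_lt.mp h2)
        have hzk : sortedVec n z k0 = a := by
          have h1 : sortedVec n z k0 ≤ a := (hz_le k0).mpr hlt'
          have h2 : ¬ sortedVec n z k0 < a := by rw [hz_lt k0]; omega
          exact le_antisymm h1 (not_lt.mp h2)
        exact hne0 (hxk.trans hzk.symm)
      · have : k0 = ks := Fin.ext heq
        rw [this, hsxks]
        exact hszks
  exact H z hzM ⟨k0, fun k hk => hfirst k hk, hlt⟩
end

section
/- If y is the egalitarian allocation of a convex TU-game (i.e., the unique Lorenz-undominated core element with unit weights), then y is the lexicographically maximal vector in the core, where vectors are compared by sorting entries non-decreasingly and comparing lexicographically. -/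
open Finset

/-- The core of the TU-game `(Fin n, v)`. -/
def core (n : ℕ) (v : Finset (Fin n) → ℝ) : Set (Fin n → ℝ) :=
  {x | ∑ i, x i = v Finset.univ ∧ ∀ S : Finset (Fin n), v S ≤ ∑ i ∈ S, x i}

/-- Convexity (supermodularity) of a TU-game. -/
def ConvexGame (n : ℕ) (v : Finset (Fin n) → ℝ) : Prop :=
  ∀ S T : Finset (Fin n), v S + v T ≤ v (S ∪ T) + v (S ∩ T)

/-- The Vickrey payment of player `i`. -/
def vickrey (n : ℕ) (v : Finset (Fin n) → ℝ) (i : Fin n) : ℝ :=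
  v Finset.univ - v (Finset.univ.erase i)

lemma cumSum_one (n : ℕ) (σ : Equiv.Perm (Fin n)) (i : ℕ) (hi : i ≤ n) :
    cumSum n (fun _ => (1:ℝ)) σ i = i := by
  unfold cumSum
  rw [Finset.sum_congr rfl (fun k hk => ?_), Finset.sum_const, Finset.card_range,
    nsmul_eq_mul, mul_one]
  have : k < n := lt_of_lt_of_le (Finset.mem_range.1 hk) hi
  simp [this]

lemma lorenz_nat (n : ℕ) (x : Fin n → ℝ) (σ : Equiv.Perm (Fin n)) (m : ℕ)
    (hm1 : 1 ≤ m) (hmn : m ≤ n) :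
    lorenz n x (fun _ => 1) σ (m : ℝ) = cumSum n x σ m := by
  unfold lorenz
  have hpos : ¬ ((m:ℝ) ≤ 0) := by
    push_neg; exact_mod_cast hm1
  rw [if_neg hpos]
  have hfil : ((Finset.range n).filter (fun i => cumSum n (fun _ => (1:ℝ)) σ i < (m:ℝ))) =
      Finset.range m := by
    ext i
    simp only [Finset.mem_filter, Finset.mem_range]
    constructor
    · rintro ⟨hin, hlt⟩
      rw [cumSum_one n σ i hin.le] at hlt
      exact_mod_cast hlt
    · intro him
      have hin : i < n := lt_of_lt_of_le him hmn
      refine ⟨hin, ?_⟩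
      rw [cumSum_one n σ i hin.le]
      exact_mod_cast him
  rw [hfil, Finset.card_range]
  have hj : m - 1 < n := lt_of_lt_of_le (Nat.sub_lt hm1 one_pos) hmn
  simp only [hj, dif_pos]
  rw [cumSum_one n σ (m-1) hj.le]
  have hsucc : m = (m - 1) + 1 := (Nat.succ_pred_eq_of_pos hm1).symm
  have : cumSum n x σ m = cumSum n x σ (m-1) + x (σ ⟨m-1, hj⟩) := by
    conv_lhs => rw [hsucc]
    unfold cumSum
    rw [Finset.sum_range_succ, dif_pos hj]
  rw [this]
  have hcast : ((m:ℝ) - ((m-1 : ℕ) : ℝ)) = 1 := by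
    rw [Nat.cast_sub hm1, Nat.cast_one]; ring
  rw [hcast]
  ring

/-- The egalitarian allocation (the core element Lorenz-dominating, with unit weights,
every other core element) of a convex game is the lexicographically maximal vector in
the core. -/
theorem egalitarian_lex_maximal (n : ℕ) (v : Finset (Fin n) → ℝ) (hv0 : v ∅ = 0)
    (hconv : ConvexGame n v) (y : Fin n → ℝ) (hy : y ∈ core n v)
    (hEA : ∀ x ∈ core n v, x ≠ y → LorenzDom n y x (fun _ => 1)) :
    ∀ x ∈ core n v, toLex (sortedVec n x) ≤ toLex (sortedVec n y) := by
  intro x hx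
  by_cases hxy : x = y
  · subst hxy; exact le_refl _
  obtain ⟨σy, σx, hSy, hSx, hle, -⟩ := hEA x hx hxy
  have hW : (∑ _i : Fin n, (1:ℝ)) = n := by simp
  have hx_mono : Monotone (x ∘ σx) := fun i j hij => by simpa using hSx i j hij
  have hy_mono : Monotone (y ∘ σy) := fun i j hij => by simpa using hSy i j hij
  have hxsort : x ∘ σx = sortedVec n x := Tuple.comp_sort_eq_comp_iff_monotone.2 hx_mono
  have hysort : y ∘ σy = sortedVec n y := Tuple.comp_sort_eq_comp_iff_monotone.2 hy_mono
  have hcx : ∀ m : ℕ, cumSum n x σx m =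
      ∑ k ∈ Finset.range m, (if h : k < n then sortedVec n x ⟨k, h⟩ else 0) := by
    intro m; unfold cumSum
    refine Finset.sum_congr rfl fun k _ => ?_
    by_cases h : k < n
    · simp only [dif_pos h]; exact congrFun hxsort ⟨k, h⟩
    · simp [h]
  have hcy : ∀ m : ℕ, cumSum n y σy m =
      ∑ k ∈ Finset.range m, (if h : k < n then sortedVec n y ⟨k, h⟩ else 0) := by
    intro m; unfold cumSum
    refine Finset.sum_congr rfl fun k _ => ?_
    by_cases h : k < n
    · simp only [dif_pos h]; exact congrFun hysort ⟨k, h⟩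
    · simp [h]
  have key : ∀ m : ℕ, m ≤ n →
      ∑ k ∈ Finset.range m, (if h : k < n then sortedVec n x ⟨k, h⟩ else 0) ≤
      ∑ k ∈ Finset.range m, (if h : k < n then sortedVec n y ⟨k, h⟩ else 0) := by
    intro m hm
    rcases Nat.eq_zero_or_pos m with rfl | hm1
    · simp
    have hmem : (m : ℝ) ∈ Set.Icc (0:ℝ) (∑ _i : Fin n, (1:ℝ)) := by
      constructor
      · positivity
      · rw [hW]; exact_mod_cast hm
    have := hle (m : ℝ) hmem
    rw [lorenz_nat n x σx m hm1 hm, lorenz_nat n y σy m hm1 hm, hcx, hcy] at this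
    exact this
  by_cases heq : sortedVec n x = sortedVec n y
  · exact le_of_eq (congrArg toLex heq)
  obtain ⟨i1, hi1⟩ := Function.ne_iff.1 heq
  have hDne : (Finset.univ.filter
      (fun i => sortedVec n x i ≠ sortedVec n y i)).Nonempty :=
    ⟨i1, Finset.mem_filter.2 ⟨Finset.mem_univ _, hi1⟩⟩
  set i0 := hDne.choose with hi0def
  have hi0 := hDne.choose_spec
  -- replace by min'
  clear hi0def hi0
  set D := Finset.univ.filter (fun i => sortedVec n x i ≠ sortedVec n y i) with hD
  set j0 := D.min' hDne with hj0
  have hj0mem : j0 ∈ D := D.min'_mem hDne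
  have hj0ne : sortedVec n x j0 ≠ sortedVec n y j0 := (Finset.mem_filter.1 hj0mem).2
  have hprev : ∀ j : Fin n, j < j0 → sortedVec n x j = sortedVec n y j := by
    intro j hj
    by_contra hne
    exact absurd (D.min'_le j (Finset.mem_filter.2 ⟨Finset.mem_univ _, hne⟩))
      (not_le.2 hj)
  have hsum_eq : ∑ k ∈ Finset.range j0.val, (if h : k < n then sortedVec n x ⟨k, h⟩ else 0) =
      ∑ k ∈ Finset.range j0.val, (if h : k < n then sortedVec n y ⟨k, h⟩ else 0) := by
    refine Finset.sum_congr rfl fun k hk => ?_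
    have hk' : k < j0.val := Finset.mem_range.1 hk
    have hkn : k < n := lt_trans hk' j0.isLt
    simp only [dif_pos hkn]
    exact hprev ⟨k, hkn⟩ hk'
  have hstep := key (j0.val + 1) j0.isLt
  rw [Finset.sum_range_succ, Finset.sum_range_succ, dif_pos j0.isLt, dif_pos j0.isLt,
    Fin.eta, hsum_eq] at hstep
  have hle0 : sortedVec n x j0 ≤ sortedVec n y j0 := le_of_add_le_add_left hstep
  have hlt : sortedVec n x j0 < sortedVec n y j0 := hle0.lt_of_ne hj0ne
  exact le_of_lt ⟨j0, hprev, hlt⟩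
end

section
/- Suppose y and x are both core elements of a convex TU-game, y Lorenz-dominates x (unit weights), and x ≠ y. Then (x+y)/2 is a core element that lexicographically dominates x (under sorted-entry comparison). In particular, a Lorenz-dominated core element cannot be the lexicographically maximal core element. -/
open Finset

/-- The sum of the `k` smallest entries of `v`. -/
noncomputable def smallSum (n : ℕ) (v : Fin n → ℝ) (k : ℕ) : ℝ :=
  ∑ i ∈ Finset.univ.filter (fun i : Fin n => (i : ℕ) < k), sortedVec n v i

/-- A strictly monotone map between `Fin` types satisfies `m ≤ f m`. -/
lemma le_apply_of_strictMono {k n : ℕ} {f : Fin k → Fin n} (hf : StrictMono f) :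
    ∀ m (hm : m < k), m ≤ ((f ⟨m, hm⟩ : Fin n) : ℕ) := by
  intro m
  induction m with
  | zero => intro _; exact Nat.zero_le _
  | succ m ih =>
    intro hm
    have hm' : m < k := Nat.lt_of_succ_lt hm
    have h1 : f ⟨m, hm'⟩ < f ⟨m + 1, hm⟩ := hf (by simp [Fin.lt_def])
    have h2 : (m : ℕ) ≤ (f ⟨m, hm'⟩ : ℕ) := ih hm'
    have h3 : ((f ⟨m, hm'⟩ : Fin n) : ℕ) < ((f ⟨m + 1, hm⟩ : Fin n) : ℕ) := h1
    omega

lemma filter_lt_eq_image {n k : ℕ} (hk : k ≤ n) :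
    Finset.univ.filter (fun i : Fin n => (i : ℕ) < k) =
      Finset.univ.image (fun j : Fin k => Fin.castLE hk j) := by
  ext i
  simp only [mem_filter, mem_univ, true_and, mem_image]
  constructor
  · intro h; exact ⟨⟨i, h⟩, rfl⟩
  · rintro ⟨j, rfl⟩; exact j.2

lemma card_filter_lt {n k : ℕ} (hk : k ≤ n) :
    (Finset.univ.filter (fun i : Fin n => (i : ℕ) < k)).card = k := by
  rw [filter_lt_eq_image hk,
    Finset.card_image_of_injective _ (Fin.castLE_injective hk)]
  simp

/-- Sum of the `k` first values of a monotone vector is at most the sum over any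
`k`-element subset. -/
lemma sum_first_le {n : ℕ} {w : Fin n → ℝ} (hw : Monotone w) (T : Finset (Fin n)) {k : ℕ}
    (hT : T.card = k) :
    ∑ i ∈ Finset.univ.filter (fun i : Fin n => (i : ℕ) < k), w i ≤ ∑ i ∈ T, w i := by
  have hk : k ≤ n := by
    have := Finset.card_le_univ T
    simpa [hT] using this
  set e := T.orderEmbOfFin hT with he
  have himg : Finset.univ.image (fun j : Fin k => e j) = T := by
    apply Finset.coe_injective
    rw [Finset.coe_image, Finset.coe_univ, Set.image_univ]
    exact T.range_orderEmbOfFin hT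
  have hR : ∑ i ∈ T, w i = ∑ j : Fin k, w (e j) := by
    rw [← himg, Finset.sum_image (fun a _ b _ h => e.injective h)]
  have hL : ∑ i ∈ Finset.univ.filter (fun i : Fin n => (i : ℕ) < k), w i
      = ∑ j : Fin k, w (Fin.castLE hk j) := by
    rw [filter_lt_eq_image hk, Finset.sum_image
      (fun a _ b _ h => Fin.castLE_injective hk h)]
  rw [hL, hR]
  apply Finset.sum_le_sum
  intro j _
  apply hw
  have := le_apply_of_strictMono e.strictMono j j.2
  simpa [Fin.le_def] using this

/-- `smallSum` is at most the sum over any `k`-element subset. -/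
lemma smallSum_le_sum {n : ℕ} (v : Fin n → ℝ) (T : Finset (Fin n)) {k : ℕ}
    (hT : T.card = k) : smallSum n v k ≤ ∑ i ∈ T, v i := by
  set σ := Tuple.sort v with hσ
  have key : ∑ i ∈ T, v i = ∑ j ∈ T.image σ.symm, (v ∘ σ) j := by
    rw [Finset.sum_image (fun a _ b _ h => σ.symm.injective h)]
    simp
  rw [smallSum, key]
  exact sum_first_le (Tuple.monotone_sort v)
    (T.image σ.symm)
    (by rw [Finset.card_image_of_injective _ σ.symm.injective, hT])

/-- `smallSum n v k` is attained by some `k`-element subset (for `k ≤ n`). -/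
lemma smallSum_eq_sum {n : ℕ} (v : Fin n → ℝ) {k : ℕ} (hk : k ≤ n) :
    ∃ S : Finset (Fin n), S.card = k ∧ smallSum n v k = ∑ i ∈ S, v i := by
  set σ := Tuple.sort v with hσ
  refine ⟨(Finset.univ.filter (fun i : Fin n => (i : ℕ) < k)).image σ, ?_, ?_⟩
  · rw [Finset.card_image_of_injective _ σ.injective, card_filter_lt hk]
  · rw [smallSum, Finset.sum_image (fun a _ b _ h => σ.injective h)]
    rfl

lemma smallSum_succ {n : ℕ} (v : Fin n → ℝ) {k : ℕ} (hk : k < n) :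
    smallSum n v (k + 1) = smallSum n v k + sortedVec n v ⟨k, hk⟩ := by
  have hins : Finset.univ.filter (fun i : Fin n => (i : ℕ) < k + 1)
      = insert ⟨k, hk⟩ (Finset.univ.filter (fun i : Fin n => (i : ℕ) < k)) := by
    ext i
    simp only [mem_filter, mem_univ, true_and, mem_insert, Fin.ext_iff]
    omega
  rw [smallSum, hins, Finset.sum_insert (by simp), smallSum]
  ring

lemma lexDom_of_smallSum {n : ℕ} (z x : Fin n → ℝ)
    (hle : ∀ k, k ≤ n → smallSum n x k ≤ smallSum n z k)
    (hs : ∃ k, k ≤ n ∧ smallSum n x k < smallSum n z k) : LexDom n z x := by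
  classical
  set a := sortedVec n x with ha
  set b := sortedVec n z with hb
  set F := Finset.univ.filter (fun j : Fin n => a j ≠ b j) with hF
  have hFne : F.Nonempty := by
    by_contra h
    have hall : ∀ j : Fin n, a j = b j := by
      intro j
      by_contra hj
      exact h ⟨j, by simp [hF, hj]⟩
    obtain ⟨k, hk, hlt⟩ := hs
    have : smallSum n x k = smallSum n z k :=
      Finset.sum_congr rfl (fun j _ => hall j)
    linarith
  set i := F.min' hFne with hi
  have hiF : i ∈ F := F.min'_mem hFne
  have hine : a i ≠ b i := by simpa [hF] using hiF
  have hjlt : ∀ j : Fin n, j < i → a j = b j := by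
    intro j hj
    by_contra hjne
    exact absurd (F.min'_le j (by simp [hF, hjne])) (not_le.mpr hj)
  have heqk : smallSum n x (i : ℕ) = smallSum n z (i : ℕ) := by
    apply Finset.sum_congr rfl
    intro j hj
    apply hjlt
    simp only [mem_filter, mem_univ, true_and] at hj
    exact Fin.lt_def.mpr hj
  have hsucc : smallSum n x ((i : ℕ) + 1) ≤ smallSum n z ((i : ℕ) + 1) :=
    hle _ i.2
  rw [smallSum_succ x i.2, smallSum_succ z i.2, heqk] at hsucc
  have hab : a i < b i := by
    have : a ⟨(i : ℕ), i.2⟩ ≤ b ⟨(i : ℕ), i.2⟩ := by linarith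
    exact lt_of_le_of_ne (by simpa using this) hine
  exact ⟨i, fun j hj => hjlt j hj, hab⟩

/-- If `y` Lorenz-dominates `x` (in the partial-sums-of-smallest-entries sense, unit
weights) and both lie in the core of a convex game, then `(x+y)/2` is a core element
lexicographically dominating `x`; in particular `x` is not the lexicographically maximal
core element. -/
theorem lorenz_dominated_not_lex_maximal (n : ℕ) (v : Finset (Fin n) → ℝ) (hv0 : v ∅ = 0)
    (hconv : ConvexGame n v) (x y : Fin n → ℝ) (hx : x ∈ core n v) (hy : y ∈ core n v)
    (hne : x ≠ y)
    (hdom : (∀ k, k ≤ n → smallSum n x k ≤ smallSum n y k) ∧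
      ∃ k, k ≤ n ∧ smallSum n x k < smallSum n y k) :
    (fun i => (x i + y i) / 2) ∈ core n v ∧ LexDom n (fun i => (x i + y i) / 2) x ∧
      ¬ (∀ m ∈ core n v, ¬ LexDom n m x) := by
  set m : Fin n → ℝ := fun i => (x i + y i) / 2 with hm
  have hcore : m ∈ core n v := by
    constructor
    · have : ∑ i, m i = (∑ i, x i + ∑ i, y i) / 2 := by
        rw [← Finset.sum_add_distrib, Finset.sum_div]
      rw [this, hx.1, hy.1]; ring
    · intro S
      have h1 := hx.2 S
      have h2 := hy.2 S
      have : ∑ i ∈ S, m i = (∑ i ∈ S, x i + ∑ i ∈ S, y i) / 2 := by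
        rw [← Finset.sum_add_distrib, Finset.sum_div]
      rw [this]; linarith
  -- smallSum superadditivity for the midpoint
  have hmid : ∀ k, k ≤ n → (smallSum n x k + smallSum n y k) / 2 ≤ smallSum n m k := by
    intro k hk
    obtain ⟨S, hScard, hSeq⟩ := smallSum_eq_sum m hk
    have hx' := smallSum_le_sum x S hScard
    have hy' := smallSum_le_sum y S hScard
    have : ∑ i ∈ S, m i = (∑ i ∈ S, x i + ∑ i ∈ S, y i) / 2 := by
      rw [← Finset.sum_add_distrib, Finset.sum_div]
    rw [hSeq, this]
    linarith
  have hle : ∀ k, k ≤ n → smallSum n x k ≤ smallSum n m k := by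
    intro k hk
    have := hdom.1 k hk
    have := hmid k hk
    linarith
  have hstrict : ∃ k, k ≤ n ∧ smallSum n x k < smallSum n m k := by
    obtain ⟨k, hk, hlt⟩ := hdom.2
    refine ⟨k, hk, ?_⟩
    have := hmid k hk
    linarith
  have hlex : LexDom n m x := lexDom_of_smallSum m x hle hstrict
  exact ⟨hcore, hlex, fun h => h m hcore hlex⟩
end

section
/- For a convex TU-game, the Vickrey payment vector (vp_i)_{i∈N} with vp_i = v(N) − v(N∖{i}) satisfies coalitional rationality: ∑_{i∈S} vp_i ≥ v(S) for every coalition S ⊆ N. -/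
open Finset

/-! A coalition `S` is built up one player at a time; by supermodularity each player's marginal
contribution is largest when it joins last, i.e. at most its Vickrey payment, and these marginal
contributions telescope to `v S - v ∅ = v S`. -/

theorem sub_le_sub_insert_of_supermodular {α : Type*} [DecidableEq α] {v : Finset α → ℝ}
    (hv : ∀ S T : Finset α, v S + v T ≤ v (S ∪ T) + v (S ∩ T)) {S T : Finset α} (hST : S ⊆ T)
    {i : α} (hi : i ∉ T) :
    v (insert i S) - v S ≤ v (insert i T) - v T := by
  have h := hv (insert i S) T
  rw [insert_union, union_eq_right.mpr hST, insert_inter_of_notMem hi,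
    inter_eq_left.mpr hST] at h
  linarith

theorem ConvexGame.sub_le_vickrey {n : ℕ} {v : Finset (Fin n) → ℝ} (hconv : ConvexGame n v)
    {S : Finset (Fin n)} {i : Fin n} (hi : i ∉ S) :
    v (insert i S) - v S ≤ vickrey n v i := by
  have hS : S ⊆ univ.erase i := fun j hj => mem_erase.mpr ⟨ne_of_mem_of_not_mem hj hi, mem_univ j⟩
  simpa only [vickrey, insert_erase (mem_univ i)] using
    sub_le_sub_insert_of_supermodular hconv hS (notMem_erase i univ)

/-- For a convex game the Vickrey payment vector satisfies coalitional rationality. -/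
theorem vickrey_coalitionally_rational (n : ℕ) (v : Finset (Fin n) → ℝ) (hv0 : v ∅ = 0)
    (hconv : ConvexGame n v) :
    ∀ S : Finset (Fin n), v S ≤ ∑ i ∈ S, vickrey n v i := by
  intro S
  induction S using Finset.induction_on with
  | empty => simp [hv0]
  | insert i S hi ih =>
    rw [sum_insert hi]
    linarith [hconv.sub_le_vickrey hi]
end

section
/- Let x, y ∈ ℝ^n, let w ∈ ℝ^n_{>0}, and suppose y w-Lorenz-dominates x. Then for every k ∈ {1,...,n}, ∑_{u=1}^k x_{σ_x(u)} ≤ ∑_{u=1}^k y_{σ_x(u)}, where σ_x is a permutation sorting the ratios x_i/w_i non-decreasingly; that is, evaluating the partial sums of y along the ordering of x still dominates the partial sums of x. -/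
open Finset

/-! ### Auxiliary machinery -/


/-- `v` along `σ`, extended to `ℕ` by zero. -/
noncomputable def ex (n : ℕ) (v : Fin n → ℝ) (σ : Equiv.Perm (Fin n)) (t : ℕ) : ℝ :=
  if h : t < n then v (σ ⟨t, h⟩) else 0

lemma cumSum_eq_ex (n : ℕ) (v : Fin n → ℝ) (σ : Equiv.Perm (Fin n)) (i : ℕ) :
    cumSum n v σ i = ∑ t ∈ range i, ex n v σ t := rfl

lemma ex_coe (n : ℕ) (v : Fin n → ℝ) (σ : Equiv.Perm (Fin n)) (i : Fin n) :
    ex n v σ (i : ℕ) = v (σ i) := by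
  simp [ex, i.isLt]

lemma sum_range_eq_fin (n : ℕ) (σ : Equiv.Perm (Fin n)) (f : ℕ → ℝ) (g : Fin n → ℝ)
    (h : ∀ i : Fin n, f (i : ℕ) = g (σ i)) :
    ∑ t ∈ range n, f t = ∑ i, g i := by
  rw [← Fin.sum_univ_eq_sum_range f n, Finset.sum_congr rfl (fun i _ => h i)]
  exact Equiv.sum_comp σ g

section withvars

variable {n : ℕ} {v w : Fin n → ℝ} {σ : Equiv.Perm (Fin n)}

lemma ex_w_nonneg (hw : ∀ i, 0 < w i) (t : ℕ) : 0 ≤ ex n w σ t := by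
  unfold ex; split
  · exact (hw _).le
  · exact le_refl 0

lemma cumSum_w_mono (hw : ∀ i, 0 < w i) {i j : ℕ} (hij : i ≤ j) :
    cumSum n w σ i ≤ cumSum n w σ j := by
  rw [cumSum_eq_ex, cumSum_eq_ex]
  exact Finset.sum_le_sum_of_subset_of_nonneg (Finset.range_subset_range.2 hij)
    (fun t _ _ => ex_w_nonneg hw t)

lemma cumSum_w_lt (hw : ∀ i, 0 < w i) {i j : ℕ} (hi : i < n) (hij : i < j) :
    cumSum n w σ i < cumSum n w σ j := by
  have h1 : cumSum n w σ (i+1) ≤ cumSum n w σ j := cumSum_w_mono hw hij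
  have h2 : cumSum n w σ (i+1) = cumSum n w σ i + ex n w σ i := by
    rw [cumSum_eq_ex, cumSum_eq_ex, Finset.sum_range_succ]
  have h3 : 0 < ex n w σ i := by
    unfold ex; rw [dif_pos hi]; exact hw _
  linarith

lemma cumSum_w_top (n : ℕ) (w : Fin n → ℝ) (σ : Equiv.Perm (Fin n)) :
    cumSum n w σ n = ∑ i, w i := by
  rw [cumSum_eq_ex]
  exact sum_range_eq_fin n σ _ w (fun i => ex_coe n w σ i)

/-- Greedy fractional allocation of total mass `p` along `σ`. -/
noncomputable def gr (n : ℕ) (w : Fin n → ℝ) (σ : Equiv.Perm (Fin n)) (p : ℝ) (t : ℕ) : ℝ :=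
  min (ex n w σ t) (max 0 (p - cumSum n w σ t))

lemma gr_nonneg (hw : ∀ i, 0 < w i) (p : ℝ) (t : ℕ) : 0 ≤ gr n w σ p t :=
  le_min (ex_w_nonneg hw t) (le_max_left _ _)

lemma gr_le (p : ℝ) (t : ℕ) : gr n w σ p t ≤ ex n w σ t := min_le_left _ _

lemma gr_partial (hw : ∀ i, 0 < w i) {p : ℝ} (hp : 0 ≤ p) (m : ℕ) :
    ∑ t ∈ range m, gr n w σ p t = min p (cumSum n w σ m) := by
  induction m with
  | zero => simp [cumSum_eq_ex, min_eq_right hp]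
  | succ m ih =>
    rw [Finset.sum_range_succ, ih]
    have hW : cumSum n w σ (m+1) = cumSum n w σ m + ex n w σ m := by
      rw [cumSum_eq_ex, cumSum_eq_ex, Finset.sum_range_succ]
    have hc : 0 ≤ ex n w σ m := ex_w_nonneg hw m
    rw [hW]
    unfold gr
    simp only [min_def, max_def]
    split_ifs <;> linarith

lemma gr_total (hw : ∀ i, 0 < w i) {p : ℝ} (hp : 0 ≤ p) (hpW : p ≤ cumSum n w σ n) :
    ∑ t ∈ range n, gr n w σ p t = p := by
  rw [gr_partial hw hp n, min_eq_left hpW]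

lemma ratio_mul_ex (hw : ∀ i, 0 < w i) (t : ℕ) :
    ex n (fun i => v i / w i) σ t * ex n w σ t = ex n v σ t := by
  unfold ex; split
  · exact div_mul_cancel₀ _ (ne_of_gt (hw _))
  · ring

lemma downclosed_eq_range (S : Finset ℕ) (h : ∀ a ∈ S, ∀ b, b < a → b ∈ S) :
    S = Finset.range S.card := by
  have hsub : S ⊆ Finset.range S.card := by
    intro a ha
    rw [Finset.mem_range]
    by_contra hcon
    push_neg at hcon
    have hsub2 : Finset.range (a+1) ⊆ S := by
      intro b hb
      rw [Finset.mem_range] at hb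
      rcases Nat.lt_succ_iff_lt_or_eq.1 hb with hb' | hb'
      · exact h a ha b hb'
      · exact hb' ▸ ha
    have := Finset.card_le_card hsub2
    rw [Finset.card_range] at this
    omega
  exact Finset.eq_of_subset_of_card_le hsub (by rw [Finset.card_range])

/-- The Lorenz curve value equals the greedy-allocation weighted sum of ratios. -/
lemma lorenz_eq_gr (hw : ∀ i, 0 < w i) {p : ℝ} (hp : 0 < p) (hpW : p ≤ cumSum n w σ n) :
    lorenz n v w σ p = ∑ t ∈ range n, ex n (fun i => v i / w i) σ t * gr n w σ p t := by
  classical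
  have hn : 0 < n := by
    by_contra hcon
    push_neg at hcon
    interval_cases n
    simp [cumSum_eq_ex] at hpW
    linarith
  have hcum0 : cumSum n w σ 0 = 0 := by simp [cumSum_eq_ex]
  set T := (Finset.range n).filter (fun i => cumSum n w σ i < p) with hT
  have hmem : ∀ a, a ∈ T ↔ a < n ∧ cumSum n w σ a < p := by
    intro a; simp [hT, Finset.mem_filter, Finset.mem_range]
  have h0T : (0:ℕ) ∈ T := (hmem 0).2 ⟨hn, by rw [hcum0]; exact hp⟩
  have hdc : ∀ a ∈ T, ∀ b, b < a → b ∈ T := by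
    intro a ha b hba
    rw [hmem] at ha ⊢
    exact ⟨lt_trans hba ha.1, lt_of_le_of_lt (cumSum_w_mono hw hba.le) ha.2⟩
  have hrange : T = Finset.range T.card := downclosed_eq_range T hdc
  have hc1 : 1 ≤ T.card := Finset.card_pos.2 ⟨0, h0T⟩
  set j := T.card - 1 with hj
  have hjT : j ∈ T := by rw [hrange, Finset.mem_range]; omega
  have hjn : j < n := ((hmem j).1 hjT).1
  have hjlt : cumSum n w σ j < p := ((hmem j).1 hjT).2
  have hjp1 : p ≤ cumSum n w σ (j+1) := by
    by_cases hj1 : j + 1 < n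
    · have hnotT : (j+1) ∉ T := by rw [hrange, Finset.mem_range]; omega
      rw [hmem] at hnotT; push_neg at hnotT
      exact hnotT hj1
    · push_neg at hj1
      exact le_trans hpW (cumSum_w_mono hw hj1)
  have hgr_lt : ∀ t, t < j → gr n w σ p t = ex n w σ t := by
    intro t ht
    have h1 : cumSum n w σ t + ex n w σ t = cumSum n w σ (t+1) := by
      rw [cumSum_eq_ex, cumSum_eq_ex, Finset.sum_range_succ]
    have h2 : cumSum n w σ (t+1) ≤ cumSum n w σ j := cumSum_w_mono hw (by omega)
    have h4 : cumSum n w σ t ≤ cumSum n w σ j := cumSum_w_mono hw ht.le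
    rw [gr, max_eq_right (by linarith : (0:ℝ) ≤ p - cumSum n w σ t)]
    exact min_eq_left (by linarith)
  have hgr_j : gr n w σ p j = p - cumSum n w σ j := by
    have h1 : cumSum n w σ j + ex n w σ j = cumSum n w σ (j+1) := by
      rw [cumSum_eq_ex, cumSum_eq_ex, Finset.sum_range_succ]
    rw [gr, max_eq_right (by linarith : (0:ℝ) ≤ p - cumSum n w σ j)]
    exact min_eq_right (by linarith)
  have hgr_gt : ∀ t, j < t → gr n w σ p t = 0 := by
    intro t ht
    have h2 : cumSum n w σ (j+1) ≤ cumSum n w σ t := cumSum_w_mono hw (by omega)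
    rw [gr, max_eq_left (by linarith : p - cumSum n w σ t ≤ 0)]
    exact min_eq_right (ex_w_nonneg hw t)
  have hsplit : ∑ t ∈ range n, ex n (fun i => v i / w i) σ t * gr n w σ p t
      = cumSum n v σ j + (p - cumSum n w σ j) * ex n (fun i => v i / w i) σ j := by
    have hsub : Finset.range (j+1) ⊆ Finset.range n := Finset.range_subset_range.2 (by omega)
    rw [← Finset.sum_subset hsub (by
      intro t htn htj
      rw [Finset.mem_range] at htn htj
      rw [hgr_gt t (by omega), mul_zero])]
    rw [Finset.sum_range_succ, hgr_j]
    congr 1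
    · rw [cumSum_eq_ex]
      apply Finset.sum_congr rfl
      intro t ht
      rw [Finset.mem_range] at ht
      rw [hgr_lt t ht, ratio_mul_ex hw]
    · ring
  rw [hsplit]
  unfold lorenz
  rw [if_neg (not_le.2 hp)]
  simp only []
  have hex : (if h : j < n then v (σ ⟨j, h⟩) / w (σ ⟨j, h⟩) else 0)
      = ex n (fun i => v i / w i) σ j := by simp [ex]
  have hcard : ((Finset.range n).filter (fun i => cumSum n w σ i < p)).card = T.card := by
    congr 1
  rw [hcard, hex]


/-- Evaluating the Lorenz curve at its own breakpoints. -/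
lemma lorenz_breakpoint (hw : ∀ i, 0 < w i) {k : ℕ} (hk1 : 1 ≤ k) (hkn : k ≤ n) :
    lorenz n v w σ (cumSum n w σ k) = cumSum n v σ k := by
  have hcum0 : cumSum n w σ 0 = 0 := by simp [cumSum_eq_ex]
  have hp : 0 < cumSum n w σ k := by
    have h := cumSum_w_lt (σ := σ) hw (show (0:ℕ) < n by omega) hk1
    rwa [hcum0] at h
  rw [lorenz_eq_gr hw hp (cumSum_w_mono hw hkn)]
  have hgr_lt : ∀ t, t < k → gr n w σ (cumSum n w σ k) t = ex n w σ t := by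
    intro t ht
    have h1 : cumSum n w σ t + ex n w σ t = cumSum n w σ (t+1) := by
      rw [cumSum_eq_ex, cumSum_eq_ex, Finset.sum_range_succ]
    have h2 : cumSum n w σ (t+1) ≤ cumSum n w σ k := cumSum_w_mono hw (by omega)
    have h4 : cumSum n w σ t ≤ cumSum n w σ k := cumSum_w_mono hw ht.le
    rw [gr, max_eq_right (by linarith : (0:ℝ) ≤ cumSum n w σ k - cumSum n w σ t)]
    exact min_eq_left (by linarith)
  have hgr_ge : ∀ t, k ≤ t → gr n w σ (cumSum n w σ k) t = 0 := by
    intro t ht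
    have h2 : cumSum n w σ k ≤ cumSum n w σ t := cumSum_w_mono hw ht
    rw [gr, max_eq_left (by linarith)]
    exact min_eq_right (ex_w_nonneg hw t)
  rw [← Finset.sum_subset (Finset.range_subset_range.2 hkn) (by
    intro t htn htk
    rw [Finset.mem_range] at htn htk
    rw [hgr_ge t (by omega), mul_zero])]
  rw [cumSum_eq_ex n v σ k]
  apply Finset.sum_congr rfl
  intro t ht
  rw [Finset.mem_range] at ht
  rw [hgr_lt t ht, ratio_mul_ex hw]

/-- If `σ` sorts the ratios, the Lorenz value is a lower bound for any fractional
allocation of mass `p`. Proved by Abel summation. -/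
lemma lorenz_le_alloc (hw : ∀ i, 0 < w i) (hs : Sorts n v w σ) {p : ℝ} (hp : 0 < p)
    (hpW : p ≤ cumSum n w σ n)
    (A : ℕ → ℝ) (hA0 : ∀ t, 0 ≤ A t) (hAw : ∀ t, A t ≤ ex n w σ t)
    (hAsum : ∑ t ∈ range n, A t = p) :
    lorenz n v w σ p ≤ ∑ t ∈ range n, ex n (fun i => v i / w i) σ t * A t := by
  rw [lorenz_eq_gr hw hp hpW]
  set s : ℕ → ℝ := ex n (fun i => v i / w i) σ with hsdef
  set g : ℕ → ℝ := fun t => A t - gr n w σ p t with hgdef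
  have key : 0 ≤ ∑ t ∈ range n, s t * g t := by
    have habel := Finset.sum_range_by_parts s g n
    simp only [smul_eq_mul] at habel
    have hG : ∑ j ∈ range n, g j = 0 := by
      simp only [hgdef, Finset.sum_sub_distrib, hAsum, gr_total hw hp.le hpW, sub_self]
    have hterm : ∀ i ∈ range (n-1), (s (i+1) - s i) * (∑ j ∈ range (i+1), g j) ≤ 0 := by
      intro i hi
      rw [Finset.mem_range] at hi
      have hi1 : i + 1 < n := by omega
      have hin : i < n := by omega
      have hmono : s i ≤ s (i+1) := by
        simp only [hsdef, ex, dif_pos hin, dif_pos hi1]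
        exact hs ⟨i, hin⟩ ⟨i+1, hi1⟩ (by simp [Fin.le_def])
      have hGle : ∑ j ∈ range (i+1), g j ≤ 0 := by
        simp only [hgdef, Finset.sum_sub_distrib]
        rw [gr_partial hw hp.le (i+1)]
        have h1 : ∑ j ∈ range (i+1), A j ≤ p := by
          rw [← hAsum]
          exact Finset.sum_le_sum_of_subset_of_nonneg (Finset.range_subset_range.2 (by omega))
            (fun t _ _ => hA0 t)
        have h2 : ∑ j ∈ range (i+1), A j ≤ cumSum n w σ (i+1) := by
          rw [cumSum_eq_ex]
          exact Finset.sum_le_sum (fun t _ => hAw t)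
        have h3 := le_min h1 h2
        linarith
      exact mul_nonpos_iff.2 (Or.inl ⟨by linarith, hGle⟩)
    have hsum := Finset.sum_nonpos hterm
    rw [habel, hG, mul_zero, zero_sub]
    linarith
  have expand : ∑ t ∈ range n, s t * A t - ∑ t ∈ range n, s t * gr n w σ p t
      = ∑ t ∈ range n, s t * g t := by
    rw [← Finset.sum_sub_distrib]
    apply Finset.sum_congr rfl
    intro t _
    simp only [hgdef]; ring
  linarith

/-- A Lorenz curve computed with a sorting permutation is below the one computed with
any other permutation. -/
lemma lorenz_sorted_le (hw : ∀ i, 0 < w i) (hs : Sorts n v w σ) (ρ : Equiv.Perm (Fin n))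
    {p : ℝ} (hp : 0 < p) (hpW : p ≤ cumSum n w σ n) :
    lorenz n v w σ p ≤ lorenz n v w ρ p := by
  have hpWρ : p ≤ cumSum n w ρ n := by
    rw [cumSum_w_top]; rw [cumSum_w_top] at hpW; exact hpW
  set b : Fin n → ℝ := fun i => gr n w ρ p ((ρ.symm i : ℕ)) with hb
  have hA0 : ∀ t, 0 ≤ ex n b σ t := by
    intro t; unfold ex; split
    · exact gr_nonneg hw p _
    · exact le_refl 0
  have hAw : ∀ t, ex n b σ t ≤ ex n w σ t := by
    intro t; unfold ex; split
    · rename_i h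
      calc b (σ ⟨t, h⟩) ≤ ex n w ρ ((ρ.symm (σ ⟨t, h⟩) : ℕ)) := gr_le p _
        _ = w (ρ (ρ.symm (σ ⟨t, h⟩))) := ex_coe n w ρ _
        _ = w (σ ⟨t, h⟩) := by rw [Equiv.apply_symm_apply]
    · exact le_refl 0
  have hAsum : ∑ t ∈ range n, ex n b σ t = p := by
    rw [sum_range_eq_fin n σ _ b (fun i => ex_coe n b σ i)]
    have h1 : ∑ i, b i = ∑ m : Fin n, gr n w ρ p ((m : Fin n) : ℕ) :=
      Equiv.sum_comp ρ.symm (fun m => gr n w ρ p ((m : Fin n) : ℕ))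
    rw [h1, Fin.sum_univ_eq_sum_range (fun t => gr n w ρ p t) n]
    exact gr_total hw hp.le hpWρ
  have hmain := lorenz_le_alloc hw hs hp hpW (ex n b σ) hA0 hAw hAsum
  have hval : ∑ t ∈ range n, ex n (fun i => v i / w i) σ t * ex n b σ t = lorenz n v w ρ p := by
    rw [sum_range_eq_fin n σ _ (fun i => (v i / w i) * b i)
      (fun i => by rw [ex_coe, ex_coe])]
    rw [← Equiv.sum_comp ρ (fun i => (v i / w i) * b i)]
    have h2 : ∀ m : Fin n, (v (ρ m) / w (ρ m)) * b (ρ m)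
        = ex n (fun i => v i / w i) ρ (m : ℕ) * gr n w ρ p (m : ℕ) := by
      intro m
      simp only [hb, Equiv.symm_apply_apply, ex_coe]
    rw [Finset.sum_congr rfl (fun m _ => h2 m)]
    rw [Fin.sum_univ_eq_sum_range (fun t => ex n (fun i => v i / w i) ρ t * gr n w ρ p t) n]
    exact (lorenz_eq_gr hw hp hpWρ).symm
  linarith

/-- Sum of an indicator-restricted function equals a cumulative sum. -/
lemma sum_if_eq_cumSum (τ : Equiv.Perm (Fin n)) (g : Fin n → ℝ) {k : ℕ} (hk : k ≤ n) :
    ∑ i, (if ((τ.symm i : ℕ)) < k then g i else 0) = cumSum n g τ k := by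
  rw [← Equiv.sum_comp τ (fun i => if ((τ.symm i : ℕ)) < k then g i else 0)]
  simp only [Equiv.symm_apply_apply]
  have h1 : ∀ u : Fin n, (if ((u : ℕ)) < k then g (τ u) else 0)
      = (fun t => if t < k then ex n g τ t else 0) ((u : ℕ)) := by
    intro u
    simp only [ex_coe]
  rw [Finset.sum_congr rfl (fun u _ => h1 u),
    Fin.sum_univ_eq_sum_range (fun t => if t < k then ex n g τ t else 0) n]
  rw [← Finset.sum_subset (Finset.range_subset_range.2 hk) (by
    intro t htn htk
    rw [Finset.mem_range] at htn htk
    rw [if_neg (by omega)])]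
  rw [cumSum_eq_ex]
  apply Finset.sum_congr rfl
  intro t ht
  rw [Finset.mem_range] at ht
  rw [if_pos ht]

end withvars

/-- If `y` `w`-Lorenz-dominates `x`, then for every `k` the partial sums of `y` taken
along `x`'s sorting order dominate the corresponding partial sums of `x`. -/
theorem lorenzDom_partial_sums_along_x (n : ℕ) (x y w : Fin n → ℝ) (hw : ∀ i, 0 < w i)
    (hdom : LorenzDom n y x w) :
    ∀ σx : Equiv.Perm (Fin n), Sorts n x w σx →
      ∀ k, 1 ≤ k → k ≤ n → cumSum n x σx k ≤ cumSum n y σx k := by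
  obtain ⟨σy, σx', hsy, hsx', hle, -⟩ := hdom
  intro τ hsx k hk1 hkn
  set p := cumSum n w τ k with hpdef
  have hn : 0 < n := lt_of_lt_of_le hk1 hkn
  have hcum0 : cumSum n w τ 0 = 0 := by simp [cumSum_eq_ex]
  have hp : 0 < p := by
    have h := cumSum_w_lt (σ := τ) hw hn hk1
    rwa [hcum0] at h
  have hpW : p ≤ cumSum n w τ n := cumSum_w_mono hw hkn
  have hpsum : p ≤ ∑ i, w i := by rw [← cumSum_w_top n w τ]; exact hpW
  have h1 : cumSum n x τ k = lorenz n x w τ p := (lorenz_breakpoint hw hk1 hkn).symm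
  have h2 : lorenz n x w τ p ≤ lorenz n x w σx' p := lorenz_sorted_le hw hsx σx' hp hpW
  have h3 : lorenz n x w σx' p ≤ lorenz n y w σy p := hle p ⟨hp.le, hpsum⟩
  have h4 : lorenz n y w σy p ≤ cumSum n y τ k := by
    set b : Fin n → ℝ := fun i => if ((τ.symm i : ℕ)) < k then w i else 0 with hb
    have hpWy : p ≤ cumSum n w σy n := by rw [cumSum_w_top]; exact hpsum
    have hA0 : ∀ t, 0 ≤ ex n b σy t := by
      intro t; unfold ex; split
      · simp only [hb]; split
        · exact (hw _).le
        · exact le_refl 0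
      · exact le_refl 0
    have hAw : ∀ t, ex n b σy t ≤ ex n w σy t := by
      intro t; unfold ex; split
      · simp only [hb]; split
        · exact le_refl _
        · exact (hw _).le
      · exact le_refl 0
    have hAsum : ∑ t ∈ range n, ex n b σy t = p := by
      rw [sum_range_eq_fin n σy _ b (fun i => ex_coe n b σy i)]
      rw [hpdef]
      exact sum_if_eq_cumSum τ w hkn
    have hmain := lorenz_le_alloc hw hsy hp hpWy (ex n b σy) hA0 hAw hAsum
    have hval : ∑ t ∈ range n, ex n (fun i => y i / w i) σy t * ex n b σy t
        = cumSum n y τ k := by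
      rw [sum_range_eq_fin n σy _ (fun i => (y i / w i) * b i)
        (fun i => by rw [ex_coe, ex_coe])]
      have h5 : ∀ i : Fin n, (y i / w i) * b i = (if ((τ.symm i : ℕ)) < k then y i else 0) := by
        intro i
        simp only [hb]; split
        · exact div_mul_cancel₀ _ (ne_of_gt (hw i))
        · exact mul_zero _
      rw [Finset.sum_congr rfl (fun i _ => h5 i)]
      exact sum_if_eq_cumSum τ y hkn
    linarith
  linarith
end
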